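/- Let 0<q<1 and let {P_n}_{n≥0} be a sequence of monic real polynomials, deg P_n = n, orthogonal with respect to a weight function w positive on an open interval (a,b). Suppose there is a real polynomial π of degree at most 4 such that ∫_a^b (D_q² P_m)(x)(D_q² P_n)(x) π(x) w(x) dx = 0 for all m ≠ n with m,n ≥ 2, and ∫_a^b ((D_q² P_n)(x))² π(x) w(x) dx ≠ 0 for all n ≥ 2. Then for every n ≥ 2 there exist real constants a_{n,n+k} (k ∈ {−2,−1,0,1,2}) with a_{n,n−2} ≠ 0 such that π(x)·(D_q² P_n)(x) = Σ_{k=−2}^{2} a_{n,n+k} P_{n+k}(x). -/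

import Mathlib

set_option autoImplicit false

open Polynomial MeasureTheory

/-- `γ_n = (q^{n/2} - q^{-n/2})/(q^{1/2} - q^{-1/2})`. -/
noncomputable def gammaAW (q : ℝ) (n : ℕ) : ℝ :=
  ((Real.sqrt q) ^ n - ((Real.sqrt q)⁻¹) ^ n) / (Real.sqrt q - (Real.sqrt q)⁻¹)

/-- `g` is the Askey–Wilson divided difference `D_q f`. -/
def IsAWDq (q : ℝ) (f g : Polynomial ℝ) : Prop :=
  ∀ z : ℝ, z ≠ 0 → z ^ 2 ≠ 1 →
    g.eval ((z + z⁻¹) / 2) =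
      (f.eval ((Real.sqrt q * z + (Real.sqrt q)⁻¹ * z⁻¹) / 2) -
          f.eval (((Real.sqrt q)⁻¹ * z + Real.sqrt q * z⁻¹) / 2)) /
        ((Real.sqrt q - (Real.sqrt q)⁻¹) * (z - z⁻¹) / 2)

/-- The Askey–Wilson operator `D_q` on polynomials. -/
noncomputable def awDq (q : ℝ) (f : Polynomial ℝ) : Polynomial ℝ :=
  letI := Classical.propDecidable (∃ g, IsAWDq q f g)
  if h : ∃ g, IsAWDq q f g then h.choose else 0

/-- `g` is the Askey–Wilson average `S_q f`. -/
def IsAWSq (q : ℝ) (f g : Polynomial ℝ) : Prop :=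
  ∀ z : ℝ, z ≠ 0 → z ^ 2 ≠ 1 →
    g.eval ((z + z⁻¹) / 2) =
      (f.eval ((Real.sqrt q * z + (Real.sqrt q)⁻¹ * z⁻¹) / 2) +
          f.eval (((Real.sqrt q)⁻¹ * z + Real.sqrt q * z⁻¹) / 2)) / 2

/-- The Askey–Wilson averaging operator `S_q` on polynomials. -/
noncomputable def awSq (q : ℝ) (f : Polynomial ℝ) : Polynomial ℝ :=
  letI := Classical.propDecidable (∃ g, IsAWSq q f g)
  if h : ∃ g, IsAWSq q f g then h.choose else 0

namespace AW

noncomputable def chT : ℕ → Polynomial ℝ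
  | 0 => 1
  | 1 => X
  | (n+2) => 2 * X * chT (n+1) - chT n

noncomputable def chU : ℕ → Polynomial ℝ
  | 0 => 1
  | 1 => 2 * X
  | (n+2) => 2 * X * chU (n+1) - chU n

lemma chT_natDegree_le (n : ℕ) : (chT n).natDegree ≤ n := by
  induction n using Nat.strong_induction_on with
  | _ n ih =>
    match n with
    | 0 => simp [chT]
    | 1 => simp [chT, natDegree_X_le]
    | (n+2) =>
      rw [chT]
      refine le_trans (natDegree_sub_le _ _) (max_le ?_ ?_)
      · refine le_trans (natDegree_mul_le) ?_
        have h1 : (2 * X : Polynomial ℝ).natDegree ≤ 1 := by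
          refine le_trans (natDegree_mul_le) ?_; simp [natDegree_X_le]
        have := ih (n+1) (by omega)
        omega
      · exact le_trans (ih n (by omega)) (by omega)

lemma chU_natDegree_le (n : ℕ) : (chU n).natDegree ≤ n := by
  induction n using Nat.strong_induction_on with
  | _ n ih =>
    match n with
    | 0 => simp [chU]
    | 1 =>
      rw [chU]
      refine le_trans (natDegree_mul_le) ?_; simp [natDegree_X_le]
    | (n+2) =>
      rw [chU]
      refine le_trans (natDegree_sub_le _ _) (max_le ?_ ?_)
      · refine le_trans (natDegree_mul_le) ?_
        have h1 : (2 * X : Polynomial ℝ).natDegree ≤ 1 := by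
          refine le_trans (natDegree_mul_le) ?_; simp [natDegree_X_le]
        have := ih (n+1) (by omega)
        omega
      · exact le_trans (ih n (by omega)) (by omega)

lemma chT_coeff_self (n : ℕ) : (chT (n+1)).coeff (n+1) = 2 ^ n := by
  induction n using Nat.strong_induction_on with
  | _ n ih =>
    match n with
    | 0 => simp [chT]
    | (n+1) =>
      rw [chT, coeff_sub]
      have h0 : (chT n).coeff (n+2) = 0 :=
        coeff_eq_zero_of_natDegree_lt (lt_of_le_of_lt (chT_natDegree_le n) (by omega))
      have h1 : (2 * X * chT (n+1)).coeff (n+2) = 2 * (chT (n+1)).coeff (n+1) := by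
        rw [mul_assoc, coeff_ofNat_mul, coeff_X_mul]
      show (2 * X * chT (n+1)).coeff (n+2) - (chT n).coeff (n+2) = 2 ^ (n+1)
      rw [h1, ih n (by omega), h0]
      ring

lemma chU_coeff_self (n : ℕ) : (chU n).coeff n = 2 ^ n := by
  induction n using Nat.strong_induction_on with
  | _ n ih =>
    match n with
    | 0 => simp [chU]
    | 1 => simp [chU]
    | (n+2) =>
      rw [chU, coeff_sub]
      have h0 : (chU n).coeff (n+2) = 0 :=
        coeff_eq_zero_of_natDegree_lt (lt_of_le_of_lt (chU_natDegree_le n) (by omega))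
      have h1 : (2 * X * chU (n+1)).coeff (n+2) = 2 * (chU (n+1)).coeff (n+1) := by
        rw [mul_assoc, coeff_ofNat_mul, coeff_X_mul]
      rw [h1, ih (n+1) (by omega), h0]
      ring

lemma chT_eval (n : ℕ) (z : ℝ) (hz : z ≠ 0) :
    (chT n).eval ((z + z⁻¹) / 2) = (z ^ n + (z⁻¹) ^ n) / 2 := by
  induction n using Nat.strong_induction_on with
  | _ n ih =>
    match n with
    | 0 => simp [chT]
    | 1 => simp [chT]
    | (n+2) =>
      rw [chT]
      simp only [eval_sub, eval_mul, eval_ofNat, eval_X]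
      rw [ih (n+1) (by omega), ih n (by omega)]
      have h : z * z⁻¹ = 1 := mul_inv_cancel₀ hz
      field_simp
      ring_nf
      linear_combination (z * z⁻¹ ^ n - z⁻¹ * z⁻¹ ^ n) * h

lemma chU_eval_mul (n : ℕ) (z : ℝ) (hz : z ≠ 0) :
    (chU n).eval ((z + z⁻¹) / 2) * (z - z⁻¹) = z ^ (n+1) - (z⁻¹) ^ (n+1) := by
  induction n using Nat.strong_induction_on with
  | _ n ih =>
    have h : z * z⁻¹ = 1 := mul_inv_cancel₀ hz
    match n with
    | 0 => simp [chU]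
    | 1 =>
      simp only [chU, eval_mul, eval_ofNat, eval_X]
      field_simp
      ring_nf
      linear_combination (z * z⁻¹ + 1) * h
    | (n+2) =>
      rw [chU]
      simp only [eval_sub, eval_mul, eval_ofNat, eval_X, sub_mul, mul_assoc]
      rw [ih (n+1) (by omega), ih n (by omega)]
      have e1 : z ^ (n+2) * (z * z⁻¹) = z ^ (n+2) := by rw [h, mul_one]
      field_simp
      ring_nf
      linear_combination (z⁻¹ ^ n * (z⁻¹ ^ 2 - z * z⁻¹)) * h

lemma isAWDq_add {q : ℝ} {f g f' g' : Polynomial ℝ} (h : IsAWDq q f g) (h' : IsAWDq q f' g') :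
    IsAWDq q (f + f') (g + g') := by
  intro z hz hz2
  simp only [eval_add, h z hz hz2, h' z hz hz2]
  ring

lemma isAWDq_smul {q : ℝ} (c : ℝ) {f g : Polynomial ℝ} (h : IsAWDq q f g) :
    IsAWDq q (c • f) (c • g) := by
  intro z hz hz2
  simp only [eval_smul, smul_eq_mul, h z hz hz2]
  ring

lemma isAWDq_const {q : ℝ} (c : ℝ) : IsAWDq q (C c) 0 := by
  intro z hz hz2
  simp

lemma sqrt_ne_zero' {q : ℝ} (hq0 : 0 < q) : Real.sqrt q ≠ 0 :=
  ne_of_gt (Real.sqrt_pos.2 hq0)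

lemma sqrt_sub_inv_ne_zero {q : ℝ} (hq0 : 0 < q) (hq1 : q < 1) :
    Real.sqrt q - (Real.sqrt q)⁻¹ ≠ 0 := by
  have h1 : Real.sqrt q < 1 := by
    rw [show (1:ℝ) = Real.sqrt 1 by simp]
    exact Real.sqrt_lt_sqrt hq0.le hq1
  have h0 : 0 < Real.sqrt q := Real.sqrt_pos.2 hq0
  have : 1 < (Real.sqrt q)⁻¹ := (one_lt_inv₀ h0).2 h1
  linarith

lemma gammaAW_ne_zero {q : ℝ} (hq0 : 0 < q) (hq1 : q < 1) {n : ℕ} (hn : 1 ≤ n) :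
    gammaAW q n ≠ 0 := by
  have h0 : 0 < Real.sqrt q := Real.sqrt_pos.2 hq0
  have h1 : Real.sqrt q < 1 := by
    rw [show (1:ℝ) = Real.sqrt 1 by simp]
    exact Real.sqrt_lt_sqrt hq0.le hq1
  have hi : 1 < (Real.sqrt q)⁻¹ := (one_lt_inv₀ h0).2 h1
  have hp : (Real.sqrt q) ^ n < 1 := pow_lt_one₀ h0.le h1 (by omega)
  have hp2 : 1 < ((Real.sqrt q)⁻¹) ^ n := one_lt_pow₀ hi (by omega)
  exact div_ne_zero (by linarith) (sqrt_sub_inv_ne_zero hq0 hq1)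

lemma key_identity (s z S Z : ℝ) (hd1 : s - S ≠ 0) (hd2 : z - Z ≠ 0) (n : ℕ) :
    ((s^(n+1) - S^(n+1))/(s - S)) * ((z^(n+1) - Z^(n+1))/(z - Z)) =
    (((s*z)^(n+1) + (S*Z)^(n+1))/2 - ((S*z)^(n+1) + (s*Z)^(n+1))/2) / ((s - S)*(z - Z)/2) := by
  rw [div_mul_div_comm, div_eq_div_iff (mul_ne_zero hd1 hd2)
    (div_ne_zero (mul_ne_zero hd1 hd2) two_ne_zero)]
  simp only [mul_pow]
  ring

lemma isAWDq_chT {q : ℝ} (hq0 : 0 < q) (hq1 : q < 1) (n : ℕ) :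
    IsAWDq q (chT (n+1)) (gammaAW q (n+1) • chU n) := by
  intro z hz hz2
  have hs : Real.sqrt q ≠ 0 := sqrt_ne_zero' hq0
  have hd : Real.sqrt q - (Real.sqrt q)⁻¹ ≠ 0 := sqrt_sub_inv_ne_zero hq0 hq1
  have hzz : z - z⁻¹ ≠ 0 := by
    intro hcon
    apply hz2
    have h1 : z = z⁻¹ := by linarith
    have h2 : z * z = z * z⁻¹ := by rw [← h1]
    rw [mul_inv_cancel₀ hz] at h2
    rw [pow_two]; exact h2
  set s := Real.sqrt q with hsdef
  have e1 : (s * z + s⁻¹ * z⁻¹) / 2 = (s * z + (s * z)⁻¹) / 2 := by rw [mul_inv]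
  have e2 : (s⁻¹ * z + s * z⁻¹) / 2 = (s⁻¹ * z + (s⁻¹ * z)⁻¹) / 2 := by
    rw [mul_inv, inv_inv]
  rw [e1, e2, chT_eval (n+1) (s*z) (mul_ne_zero hs hz),
    chT_eval (n+1) (s⁻¹*z) (mul_ne_zero (inv_ne_zero hs) hz)]
  have hUe : (chU n).eval ((z + z⁻¹) / 2) = (z ^ (n+1) - (z⁻¹) ^ (n+1)) / (z - z⁻¹) :=
    (eq_div_iff hzz).mpr (chU_eval_mul n z hz)
  rw [eval_smul, smul_eq_mul, hUe, gammaAW]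
  rw [mul_inv, mul_inv, inv_inv]
  exact key_identity s z s⁻¹ z⁻¹ hd hzz n

noncomputable def dqAux (q : ℝ) : ℕ → Polynomial ℝ → Polynomial ℝ
  | 0, _ => 0
  | (N+1), f => (f.coeff (N+1) / 2^N) • (gammaAW q (N+1) • chU N)
      + dqAux q N (f - (f.coeff (N+1) / 2^N) • chT (N+1))

lemma remainder_natDegree_le (f : Polynomial ℝ) (N : ℕ) (hf : f.natDegree ≤ N + 1) :
    (f - (f.coeff (N+1) / 2^N) • chT (N+1)).natDegree ≤ N := by
  rw [natDegree_le_iff_coeff_eq_zero]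
  intro m hm
  rw [coeff_sub, coeff_smul, smul_eq_mul]
  rcases eq_or_lt_of_le (Nat.succ_le_of_lt hm) with h | h
  · rw [← h, chT_coeff_self N]
    have : (2:ℝ)^N ≠ 0 := by positivity
    field_simp
    ring
  · rw [coeff_eq_zero_of_natDegree_lt (lt_of_le_of_lt hf h),
      coeff_eq_zero_of_natDegree_lt (lt_of_le_of_lt (chT_natDegree_le (N+1)) h)]
    ring

lemma isAWDq_dqAux {q : ℝ} (hq0 : 0 < q) (hq1 : q < 1) (N : ℕ) (f : Polynomial ℝ)
    (hf : f.natDegree ≤ N) : IsAWDq q f (dqAux q N f) := by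
  induction N generalizing f with
  | zero =>
    have : f = C (f.coeff 0) := Polynomial.eq_C_of_natDegree_le_zero hf
    rw [this, dqAux]
    exact isAWDq_const _
  | succ N ih =>
    set c := f.coeff (N+1) / 2^N with hc
    have hr : (f - c • chT (N+1)).natDegree ≤ N := remainder_natDegree_le f N hf
    have h1 : IsAWDq q (c • chT (N+1) + (f - c • chT (N+1)))
        (c • (gammaAW q (N+1) • chU N) + dqAux q N (f - c • chT (N+1))) :=
      isAWDq_add (isAWDq_smul c (isAWDq_chT hq0 hq1 N)) (ih _ hr)
    rw [add_sub_cancel] at h1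
    rw [dqAux]
    exact h1

lemma dqAux_natDegree_le (q : ℝ) (N : ℕ) (f : Polynomial ℝ) :
    (dqAux q N f).natDegree ≤ N - 1 := by
  induction N generalizing f with
  | zero => simp [dqAux]
  | succ N ih =>
    rw [dqAux]
    refine le_trans (natDegree_add_le _ _) (max_le ?_ ?_)
    · refine le_trans (natDegree_smul_le _ _) ?_
      refine le_trans (natDegree_smul_le _ _) ?_
      simpa using chU_natDegree_le N
    · exact le_trans (ih _) (by omega)

lemma dqAux_coeff (q : ℝ) (N : ℕ) (f : Polynomial ℝ) :
    (dqAux q (N+1) f).coeff N = gammaAW q (N+1) * f.coeff (N+1) := by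
  rw [dqAux, coeff_add, coeff_smul, coeff_smul, smul_eq_mul, smul_eq_mul, chU_coeff_self N]
  have h0 : (dqAux q N (f - (f.coeff (N+1) / 2^N) • chT (N+1))).coeff N = 0 := by
    match N with
    | 0 => rw [dqAux]; simp
    | (M+1) =>
      exact coeff_eq_zero_of_natDegree_lt
        (lt_of_le_of_lt (dqAux_natDegree_le q (M+1) _) (by omega))
  rw [h0]
  have : (2:ℝ)^N ≠ 0 := by positivity
  field_simp
  ring

lemma isAWDq_unique {q : ℝ} {f g1 g2 : Polynomial ℝ} (h1 : IsAWDq q f g1)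
    (h2 : IsAWDq q f g2) : g1 = g2 := by
  apply Polynomial.eq_of_infinite_eval_eq
  have hsub : (fun z : ℝ => (z + z⁻¹)/2) '' (Set.Ioi 1) ⊆ {x | eval x g1 = eval x g2} := by
    rintro x ⟨z, hz, rfl⟩
    have hz1 : (1:ℝ) < z := hz
    have hz0 : z ≠ 0 := by positivity
    have hz2 : z^2 ≠ 1 := by nlinarith
    simp only [Set.mem_setOf_eq]
    rw [h1 z hz0 hz2, h2 z hz0 hz2]
  refine Set.Infinite.mono hsub ?_
  apply Set.Infinite.image _ (Set.Ioi_infinite 1)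
  intro z hz y hy h
  have hz1 : (1:ℝ) < z := hz
  have hy1 : (1:ℝ) < y := hy
  have hz0 : z ≠ 0 := by positivity
  have hy0 : y ≠ 0 := by positivity
  have e : (z - y) * (z * y - 1) = 0 := by
    field_simp at h
    linear_combination h
  rcases mul_eq_zero.1 e with h | h
  · linarith [sub_eq_zero.1 h]
  · nlinarith

lemma awDq_eq_dqAux {q : ℝ} (hq0 : 0 < q) (hq1 : q < 1) (N : ℕ) (f : Polynomial ℝ)
    (hf : f.natDegree ≤ N) : awDq q f = dqAux q N f := by
  have hex : ∃ g, IsAWDq q f g := ⟨dqAux q N f, isAWDq_dqAux hq0 hq1 N f hf⟩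
  rw [awDq, dif_pos hex]
  exact isAWDq_unique hex.choose_spec (isAWDq_dqAux hq0 hq1 N f hf)

lemma awDq_natDegree_le {q : ℝ} (hq0 : 0 < q) (hq1 : q < 1) (f : Polynomial ℝ) :
    (awDq q f).natDegree ≤ f.natDegree - 1 := by
  rw [awDq_eq_dqAux hq0 hq1 f.natDegree f le_rfl]
  exact dqAux_natDegree_le q f.natDegree f

lemma awDq_coeff {q : ℝ} (hq0 : 0 < q) (hq1 : q < 1) (f : Polynomial ℝ) (N : ℕ)
    (hf : f.natDegree ≤ N + 1) :
    (awDq q f).coeff N = gammaAW q (N+1) * f.coeff (N+1) := by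
  rw [awDq_eq_dqAux hq0 hq1 (N+1) f hf]
  exact dqAux_coeff q N f

end AW

namespace AW
open MeasureTheory

variable {a b : ℝ} {w : ℝ → ℝ}

lemma integrable_poly_mul (hint : ∀ k : ℕ, IntegrableOn (fun x => x ^ k * w x) (Set.Ioo a b))
    (p : Polynomial ℝ) : IntegrableOn (fun x => p.eval x * w x) (Set.Ioo a b) := by
  have heq : (fun x => p.eval x * w x) =
      fun x => ∑ k ∈ Finset.range (p.natDegree + 1), p.coeff k * (x ^ k * w x) := by
    funext x
    rw [Polynomial.eval_eq_sum_range, Finset.sum_mul]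
    exact Finset.sum_congr rfl fun k _ => by ring
  rw [heq]
  exact integrable_finset_sum _ (fun k _ => (hint k).const_mul _)

lemma sq_integral_pos (hab : a < b) (hw : ∀ x ∈ Set.Ioo a b, 0 < w x)
    (hint : ∀ k : ℕ, IntegrableOn (fun x => x ^ k * w x) (Set.Ioo a b))
    {p : Polynomial ℝ} (hp : p ≠ 0) :
    0 < ∫ x in Set.Ioo a b, (p.eval x)^2 * w x := by
  set f := fun x => (p.eval x)^2 * w x with hf
  have hi : IntegrableOn f (Set.Ioo a b) := by
    have := integrable_poly_mul hint (p^2)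
    simpa only [Polynomial.eval_pow] using this
  have h1 : 0 ≤ᵐ[volume.restrict (Set.Ioo a b)] f := by
    rw [Filter.EventuallyLE, ae_restrict_iff' measurableSet_Ioo]
    refine ae_of_all _ fun x hx => ?_
    simp only [Pi.zero_apply, hf]
    exact mul_nonneg (sq_nonneg _) (hw x hx).le
  rw [setIntegral_pos_iff_support_of_nonneg_ae h1 hi]
  have hZ : volume {x : ℝ | p.IsRoot x} = 0 :=
    (Polynomial.finite_setOf_isRoot hp).measure_zero _
  have hsub : Set.Ioo a b \ {x : ℝ | p.IsRoot x} ⊆ Function.support f ∩ Set.Ioo a b := by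
    rintro x ⟨hx, hxr⟩
    refine ⟨?_, hx⟩
    have hpe : p.eval x ≠ 0 := hxr
    exact mul_ne_zero (pow_ne_zero 2 hpe) (hw x hx).ne'
  refine lt_of_lt_of_le ?_ (le_trans (measure_mono hsub) le_rfl)
  rw [measure_diff_null hZ, Real.volume_Ioo]
  exact ENNReal.ofReal_pos.2 (sub_pos.2 hab)

lemma span_graded (Q : ℕ → Polynomial ℝ) (hQd : ∀ k, (Q k).natDegree = k)
    (hQ0 : ∀ k, Q k ≠ 0) :
    ∀ (d : ℕ) (f : Polynomial ℝ), f.natDegree ≤ d →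
      ∃ c : ℕ → ℝ, f = ∑ k ∈ Finset.range (d+1), Polynomial.C (c k) * Q k := by
  intro d
  induction d with
  | zero =>
    intro f hf
    refine ⟨fun _ => f.coeff 0 / (Q 0).coeff 0, ?_⟩
    rw [Finset.sum_range_one]
    have hq0 : Q 0 = Polynomial.C ((Q 0).coeff 0) :=
      Polynomial.eq_C_of_natDegree_le_zero (le_of_eq (hQd 0))
    have hne : (Q 0).coeff 0 ≠ 0 := by
      intro h; apply hQ0 0; rw [hq0, h, map_zero]
    conv_rhs => rw [hq0]
    rw [Polynomial.coeff_C_zero, ← Polynomial.C_mul, div_mul_cancel₀ _ hne]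
    exact Polynomial.eq_C_of_natDegree_le_zero hf
  | succ d ih =>
    intro f hf
    set t := f.coeff (d+1) / (Q (d+1)).leadingCoeff with ht
    have hlc : (Q (d+1)).leadingCoeff ≠ 0 := Polynomial.leadingCoeff_ne_zero.2 (hQ0 (d+1))
    have hgd : (f - Polynomial.C t * Q (d+1)).natDegree ≤ d := by
      rw [Polynomial.natDegree_le_iff_coeff_eq_zero]
      intro m hm
      rw [Polynomial.coeff_sub, Polynomial.coeff_C_mul]
      rcases eq_or_lt_of_le (Nat.succ_le_of_lt hm) with h | h
      · have hcq : (Q (d+1)).coeff (d+1) = (Q (d+1)).leadingCoeff := by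
          rw [Polynomial.leadingCoeff, hQd]
        rw [← h, hcq, ht, div_mul_cancel₀ _ hlc, sub_self]
      · rw [Polynomial.coeff_eq_zero_of_natDegree_lt (lt_of_le_of_lt hf h),
          Polynomial.coeff_eq_zero_of_natDegree_lt (lt_of_le_of_lt (le_of_eq (hQd (d+1))) h)]
        ring
    obtain ⟨c, hc⟩ := ih _ hgd
    refine ⟨Function.update c (d+1) t, ?_⟩
    rw [Finset.sum_range_succ, Function.update_self]
    have hsum : ∑ k ∈ Finset.range (d+1), Polynomial.C (Function.update c (d+1) t k) * Q k =
        ∑ k ∈ Finset.range (d+1), Polynomial.C (c k) * Q k :=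
      Finset.sum_congr rfl fun k hk => by
        rw [Function.update_of_ne (by have := Finset.mem_range.1 hk; omega)]
    rw [hsum, ← hc]
    ring

end AW


theorem stmt3 (q : ℝ) (hq0 : 0 < q) (hq1 : q < 1)
    (a b : ℝ) (hab : a < b)
    (w : ℝ → ℝ) (hw : ∀ x ∈ Set.Ioo a b, 0 < w x)
    (P : ℕ → Polynomial ℝ) (hmonic : ∀ n, (P n).Monic) (hdeg : ∀ n, (P n).natDegree = n)
    (hint : ∀ k : ℕ, IntegrableOn (fun x => x ^ k * w x) (Set.Ioo a b))
    (horth : ∀ m n, m ≠ n → ∫ x in Set.Ioo a b, (P m).eval x * (P n).eval x * w x = 0)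
    (π : Polynomial ℝ) (hπ : π.degree ≤ 4)
    (horthD2 : ∀ m n, 2 ≤ m → 2 ≤ n → m ≠ n →
      ∫ x in Set.Ioo a b, (awDq q (awDq q (P m))).eval x * (awDq q (awDq q (P n))).eval x *
        π.eval x * w x = 0)
    (hnormD2 : ∀ n, 2 ≤ n →
      ∫ x in Set.Ioo a b, ((awDq q (awDq q (P n))).eval x) ^ 2 * π.eval x * w x ≠ 0) :
    ∀ n, 2 ≤ n → ∃ am2 am1 a0 ap1 ap2 : ℝ, am2 ≠ 0 ∧
      π * awDq q (awDq q (P n)) =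
        C am2 * P (n - 2) + C am1 * P (n - 1) + C a0 * P n +
          C ap1 * P (n + 1) + C ap2 * P (n + 2) := by
  intro n hn
  classical
  have hγ : ∀ m : ℕ, 1 ≤ m → gammaAW q m ≠ 0 := fun m hm => AW.gammaAW_ne_zero hq0 hq1 hm
  -- degree facts for the twice-differentiated polynomials
  have hD2coeff : ∀ m, 2 ≤ m →
      (awDq q (awDq q (P m))).coeff (m-2) = gammaAW q (m-1) * (gammaAW q m * 1) := by
    intro m hm
    have hd1 : (awDq q (P m)).natDegree ≤ m - 1 := by
      have := AW.awDq_natDegree_le hq0 hq1 (P m); rwa [hdeg] at this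
    have hc1 : (awDq q (P m)).coeff (m-1) = gammaAW q m * 1 := by
      have h := AW.awDq_coeff hq0 hq1 (P m) (m-1) (by rw [hdeg]; omega)
      rw [show m - 1 + 1 = m by omega] at h
      rw [h]
      congr 1
      have := (hmonic m).coeff_natDegree
      rwa [hdeg] at this
    have h2 := AW.awDq_coeff hq0 hq1 (awDq q (P m)) (m-2) (by omega)
    rw [show m - 2 + 1 = m - 1 by omega] at h2
    rw [h2, hc1]
  have hD2deg : ∀ m, 2 ≤ m → (awDq q (awDq q (P m))).natDegree = m - 2 := by
    intro m hm
    have hd1 : (awDq q (P m)).natDegree ≤ m - 1 := by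
      have := AW.awDq_natDegree_le hq0 hq1 (P m); rwa [hdeg] at this
    have hle : (awDq q (awDq q (P m))).natDegree ≤ m - 2 :=
      le_trans (AW.awDq_natDegree_le hq0 hq1 _) (by omega)
    have hne : (awDq q (awDq q (P m))).coeff (m-2) ≠ 0 := by
      rw [hD2coeff m hm]
      exact mul_ne_zero (hγ (m-1) (by omega)) (by rw [mul_one]; exact hγ m (by omega))
    exact le_antisymm hle (Polynomial.le_natDegree_of_ne_zero hne)
  have hD2ne : ∀ m, 2 ≤ m → awDq q (awDq q (P m)) ≠ 0 := by
    intro m hm h0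
    have := hD2coeff m hm
    rw [h0] at this
    simp only [Polynomial.coeff_zero] at this
    exact mul_ne_zero (hγ (m-1) (by omega)) (by rw [mul_one]; exact hγ m (by omega)) this.symm
  have hikey : ∀ p : Polynomial ℝ, IntegrableOn (fun x => p.eval x * w x) (Set.Ioo a b) :=
    AW.integrable_poly_mul hint
  -- expansion of E = π * D² Pₙ in the basis P
  have hπn : π.natDegree ≤ 4 := Polynomial.natDegree_le_iff_degree_le.2 hπ
  have hEdeg : (π * awDq q (awDq q (P n))).natDegree ≤ n + 2 :=
    le_trans (Polynomial.natDegree_mul_le) (by rw [hD2deg n hn]; omega)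
  obtain ⟨c, hE⟩ := AW.span_graded P hdeg (fun k => (hmonic k).ne_zero) (n+2) _ hEdeg
  -- step (a): the inner products against P j
  have hIa : ∀ j, j < n + 3 →
      (∫ x in Set.Ioo a b, (π * awDq q (awDq q (P n))).eval x * (P j).eval x * w x)
        = c j * ∫ x in Set.Ioo a b, ((P j).eval x)^2 * w x := by
    intro j hj
    have hfe : (fun x => (π * awDq q (awDq q (P n))).eval x * (P j).eval x * w x) =
        (fun x => ∑ k ∈ Finset.range (n+3),
          c k * ((P k).eval x * ((P j).eval x * w x))) := by
      funext x
      rw [hE, Polynomial.eval_finset_sum, Finset.sum_mul, Finset.sum_mul]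
      exact Finset.sum_congr rfl fun k _ => by
        rw [Polynomial.eval_mul, Polynomial.eval_C]; ring
    rw [hfe, integral_finset_sum _ (fun k _ => by
      simpa only [Polynomial.eval_mul, mul_assoc] using (hikey (P k * P j)).const_mul (c k))]
    have h0 : ∀ k ∈ Finset.range (n+3), k ≠ j →
        (∫ x in Set.Ioo a b, c k * ((P k).eval x * ((P j).eval x * w x))) = 0 := by
      intro k _ hkj
      rw [integral_const_mul]
      have : (∫ x in Set.Ioo a b, (P k).eval x * ((P j).eval x * w x))
          = ∫ x in Set.Ioo a b, (P k).eval x * (P j).eval x * w x := by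
        congr 1; funext x; ring
      rw [this, horth k j hkj, mul_zero]
    rw [Finset.sum_eq_single j h0 (fun h => absurd (Finset.mem_range.2 hj) h),
      integral_const_mul]
    congr 1
    congr 1
    funext x
    ring
  -- step (b): the inner products via the D² orthogonality
  have hQd : ∀ k : ℕ, (awDq q (awDq q (P (k+2)))).natDegree = k := by
    intro k
    rw [hD2deg (k+2) (by omega)]
    omega
  have hQ0 : ∀ k : ℕ, awDq q (awDq q (P (k+2))) ≠ 0 := fun k => hD2ne (k+2) (by omega)
  have hIb : ∀ j (d : ℕ → ℝ),
      P j = (∑ m ∈ Finset.range (j+1), Polynomial.C (d m) * awDq q (awDq q (P (m+2)))) →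
      (∫ x in Set.Ioo a b, (π * awDq q (awDq q (P n))).eval x * (P j).eval x * w x)
        = ∑ m ∈ Finset.range (j+1), d m * ∫ x in Set.Ioo a b,
            (awDq q (awDq q (P (m+2)))).eval x * (awDq q (awDq q (P n))).eval x *
              π.eval x * w x := by
    intro j d hd
    have hfe : (fun x => (π * awDq q (awDq q (P n))).eval x * (P j).eval x * w x) =
        (fun x => ∑ m ∈ Finset.range (j+1),
          d m * ((awDq q (awDq q (P (m+2)))).eval x * ((awDq q (awDq q (P n))).eval x *
            (π.eval x * w x)))) := by
      funext x
      conv_lhs => rw [hd]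
      rw [Polynomial.eval_mul, Polynomial.eval_finset_sum, Finset.mul_sum, Finset.sum_mul]
      exact Finset.sum_congr rfl fun m _ => by
        rw [Polynomial.eval_mul, Polynomial.eval_C]; ring
    rw [hfe, integral_finset_sum _ (fun m _ => by
      simpa only [Polynomial.eval_mul, mul_assoc] using
        (hikey (awDq q (awDq q (P (m+2))) * awDq q (awDq q (P n)) * π)).const_mul (d m))]
    refine Finset.sum_congr rfl fun m _ => ?_
    rw [integral_const_mul]
    congr 1
    congr 1
    funext x
    ring
  -- vanishing coefficients
  have hczero : ∀ j, j + 2 < n → c j = 0 := by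
    intro j hj
    obtain ⟨d, hd⟩ := AW.span_graded _ hQd hQ0 j (P j) (le_of_eq (hdeg j))
    have h1 := hIb j d hd
    have h2 : (∫ x in Set.Ioo a b,
        (π * awDq q (awDq q (P n))).eval x * (P j).eval x * w x) = 0 := by
      rw [h1]
      refine Finset.sum_eq_zero fun m hm => ?_
      have hm' := Finset.mem_range.1 hm
      rw [horthD2 (m+2) n (by omega) hn (by omega), mul_zero]
    have h3 := hIa j (by omega)
    rw [h2] at h3
    have h4 := AW.sq_integral_pos hab hw hint (hmonic j).ne_zero
    rcases mul_eq_zero.1 h3.symm with h | h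
    · exact h
    · exact absurd h h4.ne'
  -- the coefficient of P (n-2) is nonzero
  have hcne : c (n-2) ≠ 0 := by
    obtain ⟨d, hd⟩ := AW.span_graded _ hQd hQ0 (n-2) (P (n-2)) (le_of_eq (hdeg (n-2)))
    have hdne : d (n-2) ≠ 0 := by
      intro h0
      have hcoeff := congrArg (fun p : Polynomial ℝ => p.coeff (n-2)) hd
      simp only [Polynomial.finset_sum_coeff, Polynomial.coeff_C_mul] at hcoeff
      rw [Finset.sum_eq_single (n-2) (fun k hk hkne => by
          rw [Polynomial.coeff_eq_zero_of_natDegree_lt (by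
            rw [hQd k]
            have := Finset.mem_range.1 hk
            omega), mul_zero])
        (fun h => absurd (Finset.mem_range.2 (by omega)) h)] at hcoeff
      rw [h0, zero_mul] at hcoeff
      have hone : (P (n-2)).coeff (n-2) = 1 := by
        have := (hmonic (n-2)).coeff_natDegree
        rwa [hdeg] at this
      rw [hone] at hcoeff
      exact one_ne_zero hcoeff
    have h1 := hIb (n-2) d hd
    have h2 : (∫ x in Set.Ioo a b,
        (π * awDq q (awDq q (P n))).eval x * (P (n-2)).eval x * w x) ≠ 0 := by
      rw [h1, show n - 2 + 1 = n - 1 by omega]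
      rw [Finset.sum_eq_single (n-2) (fun m hm hmne => by
          rw [horthD2 (m+2) n (by omega) hn (by omega), mul_zero])
        (fun h => absurd (Finset.mem_range.2 (by omega)) h)]
      rw [show n - 2 + 2 = n by omega]
      have : (∫ x in Set.Ioo a b, (awDq q (awDq q (P n))).eval x *
          (awDq q (awDq q (P n))).eval x * π.eval x * w x)
          = ∫ x in Set.Ioo a b, ((awDq q (awDq q (P n))).eval x) ^ 2 * π.eval x * w x := by
        congr 1; funext x; ring
      rw [this]
      exact mul_ne_zero hdne (hnormD2 n hn)
    intro h0
    apply h2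
    rw [hIa (n-2) (by omega), h0, zero_mul]
  -- assemble
  obtain ⟨m, rfl⟩ : ∃ m, n = m + 2 := ⟨n - 2, by omega⟩
  refine ⟨c m, c (m+1), c (m+2), c (m+3), c (m+4), by
    simpa [show m + 2 - 2 = m by omega] using hcne, ?_⟩
  rw [show m + 2 - 2 = m by omega, show m + 2 - 1 = m + 1 by omega]
  rw [hE]
  rw [show m + 2 + 2 + 1 = m + 5 by omega]
  rw [Finset.sum_range_succ, Finset.sum_range_succ, Finset.sum_range_succ,
    Finset.sum_range_succ, Finset.sum_range_succ]
  rw [Finset.sum_eq_zero (fun k hk => by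
    rw [hczero k (by have := Finset.mem_range.1 hk; omega), Polynomial.C_0, zero_mul])]
  rw [show m + 1 + 1 = m + 2 by omega, show m + 1 + 1 + 1 = m + 3 by omega,
    show m + 1 + 1 + 1 + 1 = m + 4 by omega, show m + 2 + 1 = m + 3 by omega,
    show m + 2 + 2 = m + 4 by omega]
  ring
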